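/- Let α ∈ ℂ with |α| = 1 and, for real r, let D₃(r) be the 3×3 matrix [[r, conj(α), 2·conj(α)²], [α, r, 1], [2α², 1, r]]. Then: (1) det D₃(r) = r³ − 6r + 2α + 2conj(α) for every real r; (2) the polynomial r³ − 6r + 2α + 2conj(α) (which has real coefficients since 2α + 2conj(α) = 4 Re α) has a largest real root r̂, which is positive and is a simple root; (3) D₃(r̂) is Hermitian positive semidefinite of rank 2 (corank one). -/

import Mathlib

/-!
The cubic `x³ - 6x + c` with `c = 4 Re α ∈ [-4, 4]` is negative at `√2`, positive at `3` and
strictly increasing on `[√2, ∞)`, so it has a root `r̂ > √2` and no larger one; `3 r̂² - 6 > 0`.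

For `r ≠ 0` and `r² ≠ 1`, Gaussian elimination gives the factorization
`D₃(r) = Lᴴ diag(r, r - 1/r, det D₃(r) / (r² - 1)) L` with `L` unit upper triangular.
At `r̂` the pivots are `r̂ > 0`, `r̂ - 1/r̂ > 0` and `0`, so `D₃(r̂)` is positive semidefinite
of rank `2`.
-/

open scoped ComplexOrder

/-- The matrix `D₃(r)` of the 3⊗3 construction. -/
noncomputable def D3 (α : ℂ) (r : ℝ) : Matrix (Fin 3) (Fin 3) ℂ :=
  !![(r : ℂ), (starRingEnd ℂ) α, 2 * ((starRingEnd ℂ) α) ^ 2;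
     α, (r : ℂ), 1;
     2 * α ^ 2, 1, (r : ℂ)]

open Matrix ComplexConjugate

lemma cubic_strictMonoOn (c : ℝ) :
    StrictMonoOn (fun x : ℝ => x ^ 3 - 6 * x + c) (Set.Ici √2) := by
  intro x hx y hy hxy
  have h2 : √2 ^ 2 = 2 := Real.sq_sqrt zero_le_two
  have hx2 : 2 ≤ x ^ 2 := by nlinarith [Real.sqrt_nonneg 2, Set.mem_Ici.mp hx]
  have hxy2 : 2 < x * y := by nlinarith [Real.sqrt_nonneg 2, Set.mem_Ici.mp hx]
  -- `(y³ - 6y) - (x³ - 6x) = (y - x)(x² + xy + y² - 6)`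
  nlinarith [mul_pos (sub_pos.mpr hxy) (by nlinarith : 0 < x ^ 2 + x * y + y ^ 2 - 6)]

lemma exists_cubic_root_gt_sqrt_two {c : ℝ} (hc : |c| ≤ 4) :
    ∃ r, √2 < r ∧ r ^ 3 - 6 * r + c = 0 := by
  have h2 : √2 ^ 2 = 2 := Real.sq_sqrt zero_le_two
  have h1 : 1 < √2 := by nlinarith [Real.sqrt_nonneg 2]
  have hc' := abs_le.mp hc
  have hleft : √2 ^ 3 - 6 * √2 + c < 0 := by nlinarith
  have hright : 0 < (3 : ℝ) ^ 3 - 6 * 3 + c := by linarith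
  obtain ⟨r, ⟨hr, -⟩, hroot⟩ := intermediate_value_Icc (by nlinarith : √2 ≤ 3)
    (f := fun x : ℝ => x ^ 3 - 6 * x + c) (by fun_prop) ⟨hleft.le, hright.le⟩
  refine ⟨r, hr.lt_of_ne ?_, hroot⟩
  rintro rfl
  exact hleft.ne hroot

lemma exists_isGreatest_cubic_roots {c : ℝ} (hc : |c| ≤ 4) :
    ∃ r, √2 < r ∧ IsGreatest {x : ℝ | x ^ 3 - 6 * x + c = 0} r := by
  obtain ⟨r, hr, hroot⟩ := exists_cubic_root_gt_sqrt_two hc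
  refine ⟨r, hr, hroot, fun s hs => not_lt.mp fun hrs => ?_⟩
  have := cubic_strictMonoOn c (Set.mem_Ici.mpr hr.le) (Set.mem_Ici.mpr (hr.trans hrs).le) hrs
  exact this.ne (hroot.trans hs.symm)

lemma rank_conjTranspose_mul_diagonal_mul {n K : Type*} [Fintype n] [DecidableEq n] [Field K]
    [StarRing K] [DecidableEq K] {L : Matrix n n K} (hL : IsUnit L.det) (d : n → K) :
    (Lᴴ * diagonal d * L).rank = Fintype.card {i // d i ≠ 0} := by
  have hLH : IsUnit Lᴴ.det := by rw [det_conjTranspose]; exact hL.star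
  rw [rank_mul_eq_left_of_isUnit_det _ _ hL, rank_mul_eq_right_of_isUnit_det _ _ hLH,
    rank_diagonal]

lemma cubic_add_conj_eq_ofReal (α : ℂ) (r : ℝ) :
    (r : ℂ) ^ 3 - 6 * r + 2 * α + 2 * conj α = ((r ^ 3 - 6 * r + 4 * α.re : ℝ) : ℂ) := by
  push_cast
  rw [Complex.re_eq_add_conj]
  ring

section D3

variable {α : ℂ}

lemma D3_det (hα : α * conj α = 1) (r : ℝ) :
    (D3 α r).det = (r : ℂ) ^ 3 - 6 * r + 2 * α + 2 * conj α := by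
  simp only [D3, det_fin_three, of_apply, cons_val', cons_val_zero, cons_val_one, cons_val_two,
    empty_val', cons_val_fin_one, head_cons, head_fin_const, tail_cons]
  linear_combination (2 * (α + conj α) - r * (4 * (α * conj α) + 5)) * hα

noncomputable def D3Factor (α : ℂ) (r : ℝ) : Matrix (Fin 3) (Fin 3) ℂ :=
  !![1, conj α / r, 2 * conj α ^ 2 / r;
     0, 1, (r - 2 * conj α) / (r ^ 2 - 1);
     0, 0, 1]

noncomputable def D3Pivots (α : ℂ) (r : ℝ) : Fin 3 → ℝ :=
  ![r, r - r⁻¹, (r ^ 3 - 6 * r + 4 * α.re) / (r ^ 2 - 1)]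

lemma det_D3Factor (α : ℂ) (r : ℝ) : (D3Factor α r).det = 1 := by
  simp [D3Factor, det_fin_three]

lemma D3_eq_conjTranspose_mul_diagonal_mul (hα : α * conj α = 1) {r : ℝ} (hr : r ≠ 0)
    (hr1 : r ^ 2 ≠ 1) :
    D3 α r = (D3Factor α r)ᴴ * diagonal (fun i => (D3Pivots α r i : ℂ)) * D3Factor α r := by
  have hr' : (r : ℂ) ≠ 0 := by exact_mod_cast hr
  have hr1' : (r : ℂ) ^ 2 - 1 ≠ 0 := by exact_mod_cast sub_ne_zero.mpr hr1
  have hα0 : α ≠ 0 := left_ne_zero_of_mul_eq_one hα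
  have hconj : conj α = α⁻¹ := eq_inv_of_mul_eq_one_right hα
  ext i j
  fin_cases i <;> fin_cases j <;>
    simp [D3, D3Factor, D3Pivots, mul_apply, Fin.sum_univ_three, Complex.re_eq_add_conj, hconj,
      map_ofNat] <;>
    field_simp <;>
    ring

lemma D3Pivots_of_root {r : ℝ} (hroot : r ^ 3 - 6 * r + 4 * α.re = 0) :
    D3Pivots α r = ![r, r - r⁻¹, 0] := by
  simp [D3Pivots, hroot]

lemma D3_posSemidef_and_rank_of_root (hα : α * conj α = 1) {r : ℝ} (hr : 1 < r)
    (hroot : r ^ 3 - 6 * r + 4 * α.re = 0) :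
    (D3 α r).PosSemidef ∧ (D3 α r).rank = 2 := by
  have hr0 : 0 < r := one_pos.trans hr
  have hpivot : 0 < r - r⁻¹ := sub_pos.mpr ((inv_lt_one_of_one_lt₀ hr).trans hr)
  rw [D3_eq_conjTranspose_mul_diagonal_mul hα hr0.ne' (by nlinarith), D3Pivots_of_root hroot]
  constructor
  · have hd (i : Fin 3) : 0 ≤ (![r, r - r⁻¹, 0] : Fin 3 → ℝ) i := by
      fin_cases i <;> simp [hr0.le, hpivot.le]
    exact (PosSemidef.diagonal fun i => Complex.zero_le_real.mpr (hd i)).conjTranspose_mul_mul_same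
      (D3Factor α r)
  · rw [rank_conjTranspose_mul_diagonal_mul (by simp [det_D3Factor])]
    simp [Fintype.card_subtype, Finset.card_filter, Fin.sum_univ_three, hr0.ne', hpivot.ne']

end D3

theorem stmt9 (α : ℂ) (hα : ‖α‖ = 1) :
    (∀ r : ℝ, (D3 α r).det = (r : ℂ) ^ 3 - 6 * (r : ℂ) + 2 * α + 2 * (starRingEnd ℂ) α) ∧
    ∃ rh : ℝ,
      ((rh : ℂ) ^ 3 - 6 * (rh : ℂ) + 2 * α + 2 * (starRingEnd ℂ) α = 0) ∧
      (∀ s : ℝ, (s : ℂ) ^ 3 - 6 * (s : ℂ) + 2 * α + 2 * (starRingEnd ℂ) α = 0 → s ≤ rh) ∧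
      0 < rh ∧
      3 * rh ^ 2 - 6 ≠ 0 ∧
      (D3 α rh).PosSemidef ∧ (D3 α rh).rank = 2 := by
  have hα' : α * conj α = 1 := by simp [Complex.mul_conj', hα]
  have hc : |4 * α.re| ≤ 4 := by
    have := Complex.abs_re_le_norm α
    rw [hα, abs_le] at this
    exact abs_le.mpr ⟨by linarith, by linarith⟩
  obtain ⟨rh, hrh, hroot, hgreatest⟩ := exists_isGreatest_cubic_roots hc
  have hroots (s : ℝ) :
      (s : ℂ) ^ 3 - 6 * s + 2 * α + 2 * conj α = 0 ↔ s ^ 3 - 6 * s + 4 * α.re = 0 := by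
    rw [cubic_add_conj_eq_ofReal, Complex.ofReal_eq_zero]
  have hrh0 : 0 < rh := (Real.sqrt_nonneg 2).trans_lt hrh
  have hrh2 : 2 < rh ^ 2 := (Real.sqrt_lt' hrh0).mp hrh
  refine ⟨D3_det hα', rh, (hroots rh).mpr hroot, fun s hs => hgreatest ((hroots s).mp hs), hrh0,
    by linarith, D3_posSemidef_and_rank_of_root hα' (by nlinarith) hroot⟩
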